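/- In the quantum symplectic space 𝒳, for every i ∈ I⁺ and every a ∈ ℕ^{2n}: Ω_i x^a = (∏_{l=−n}^{−i} q^{2a_l}) Σ_{j=i}^{n} q^{j−i+s_j(a)} x^{a+ε_{−j}+ε_j}, where s_j(a) := Σ_{l ∈ I, −j < l < j} a_l. -/

import Mathlib

noncomputable section

/-- The element `Ω_i = Σ_{j=i}^{n} q^{j-i} x_{-j} x_j` (with `Ω_{n+1} = 0`). -/
def Om {k X : Type*} [Field k] [Ring X] [Algebra k X]
    (q : k) (x : ℤ → X) (n : ℕ) (i : ℤ) : X :=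
  ∑ j ∈ Finset.Icc i (n : ℤ), q ^ (j - i) • (x (-j) * x j)

/-- The increasing list of indices `-n, …, -1, 1, …, n`. -/
def idxList (n : ℕ) : List ℤ :=
  ((List.range (2 * n + 1)).map (fun t => (t : ℤ) - n)).filter (fun i => i != 0)

/-- The normal monomial `x^a = x_{-n}^{a_{-n}} ⋯ x_n^{a_n}`. -/
def mono {X : Type*} [Monoid X] (x : ℤ → X) (n : ℕ) (a : ℤ → ℕ) : X :=
  ((idxList n).map (fun i => x i ^ a i)).prod

/-- `s_j(a) = Σ_{l ∈ I, -j < l < j} a_l`. -/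
def sE (j : ℤ) (a : ℤ → ℕ) : ℕ :=
  ∑ l ∈ (Finset.Ioo (-j) j).erase 0, a l

/-!
Induct on `a`, splitting off the leftmost letter: `x^a = x_m x^{a'}`. If `m < i`, then `Ω_i`
`q`-commutes with `x_m`, with factor `q²` when `m ≤ -i` (this is where the relation
`x_p x_{-p} = q² x_{-p} x_p + q²λ Ω_{p+1}` enters, via `q²λ + q = q³`) and `1` otherwise. So the
formula for `a'` yields the one for `a` once `x_m` is moved into each `x^{a'+ε_{-j}+ε_j}`, where it
passes `x_{-j}` exactly when `-j < m`; this accounts for the changes of the prefactor and of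
`s_j`. If `i ≤ m`, split `Ω_i = Σ_{j ≤ m} q^{j-i} x_{-j} x_j + q^{m+1-i} Ω_{m+1}`: the terms with
`j ≤ m` are already normal monomials, and `Ω_{m+1}` falls under the first case.
-/

open Finset

def idxFinset (n : ℕ) : Finset ℤ := (Icc (-(n : ℤ)) n).erase 0

lemma mem_idxFinset {n : ℕ} {l : ℤ} : l ∈ idxFinset n ↔ l ≠ 0 ∧ -(n : ℤ) ≤ l ∧ l ≤ n := by
  simp [idxFinset]

lemma idxList_eq (n : ℕ) :
    idxList n = ((List.range (2 * n + 1)).map fun t : ℕ => (t : ℤ) - n).filter (· != 0) := by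
  simp only [idxList, bind_pure_comp, Functor.map, List.map_map]
  rfl

lemma mem_idxList {n : ℕ} {l : ℤ} : l ∈ idxList n ↔ l ∈ idxFinset n := by
  simp only [idxList_eq, List.mem_filter, List.mem_map, List.mem_range, mem_idxFinset,
    bne_iff_ne, ne_eq]
  constructor
  · rintro ⟨⟨t, ht, rfl⟩, h0⟩
    omega
  · rintro ⟨h0, h1, h2⟩
    exact ⟨⟨(l + n).toNat, by omega, by omega⟩, h0⟩

lemma idxList_pairwise_lt (n : ℕ) : (idxList n).Pairwise (· < ·) := by
  rw [idxList_eq]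
  exact (List.pairwise_map.mpr ((List.pairwise_lt_range (n := 2 * n + 1)).imp
    fun h => by omega)).sublist List.filter_sublist

/-- `x_m` is the leftmost letter of `x^(a + ε_m)`. -/
def VanishesBelow (n : ℕ) (a : ℤ → ℕ) (m : ℤ) : Prop :=
  ∀ l ∈ idxFinset n, l < m → a l = 0

lemma VanishesBelow.anti {n : ℕ} {a : ℤ → ℕ} {m m' : ℤ} (ha : VanishesBelow n a m)
    (h : m' ≤ m) : VanishesBelow n a m' :=
  fun l hl hlm => ha l hl (by omega)

lemma VanishesBelow.add_single {n : ℕ} {a : ℤ → ℕ} {m r : ℤ} (ha : VanishesBelow n a m)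
    (h : m ≤ r) : VanishesBelow n (a + Pi.single r 1) m := by
  intro l hl hlm
  simp [ha l hl hlm, show l ≠ r by omega]

lemma sum_add_single (s : Finset ℤ) (a : ℤ → ℕ) (r : ℤ) :
    ∑ l ∈ s, (a + Pi.single r 1 : ℤ → ℕ) l = ∑ l ∈ s, a l + if r ∈ s then 1 else 0 := by
  simp only [Pi.add_apply, sum_add_distrib, sum_pi_single']

lemma sE_add_single (j r : ℤ) (a : ℤ → ℕ) :
    sE j (a + Pi.single r 1) = sE j a + if r ≠ 0 ∧ -j < r ∧ r < j then 1 else 0 := by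
  simp only [sE, sum_add_single, mem_erase, mem_Ioo]

lemma sE_eq_zero {n : ℕ} {a : ℤ → ℕ} {m j : ℤ} (ha : VanishesBelow n a m) (hj : j ≤ m)
    (hjn : j ≤ n) : sE j a = 0 :=
  sum_eq_zero fun l hl => by
    simp only [mem_erase, mem_Ioo] at hl
    exact ha l (mem_idxFinset.mpr ⟨hl.1, by omega, by omega⟩) (by omega)

lemma prod_pow_two_mul_add_single {k : Type*} [CommMonoid k] (q : k) (s : Finset ℤ)
    (a : ℤ → ℕ) (m : ℤ) :
    ∏ l ∈ s, q ^ (2 * (a + Pi.single m 1 : ℤ → ℕ) l)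
      = (if m ∈ s then q ^ 2 else 1) * ∏ l ∈ s, q ^ (2 * a l) := by
  simp only [Pi.add_apply, mul_add, pow_add, prod_mul_distrib,
    mul_comm (∏ l ∈ s, q ^ (2 * a l))]
  congr 1
  simp [Pi.single_apply, apply_ite (q ^ ·), prod_ite_eq']

lemma prod_pow_two_mul_eq_one {k : Type*} [CommMonoid k] (q : k) {n : ℕ} {a : ℤ → ℕ}
    {i m : ℤ} (ha : VanishesBelow n a m) (hi : 1 ≤ i) (him : -i < m) :
    ∏ l ∈ Icc (-(n : ℤ)) (-i), q ^ (2 * a l) = 1 :=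
  prod_eq_one fun l hl => by
    rw [mem_Icc] at hl
    rw [ha l (mem_idxFinset.mpr ⟨by omega, hl.1, by omega⟩) (by omega), mul_zero, pow_zero]

theorem induction_add_single_left {n : ℕ} {P : (ℤ → ℕ) → Prop}
    (zero : ∀ a, (∀ l ∈ idxFinset n, a l = 0) → P a)
    (add_single : ∀ a m, m ∈ idxFinset n → VanishesBelow n a m → P a → P (a + Pi.single m 1))
    (a : ℤ → ℕ) : P a := by
  induction hw : ∑ l ∈ idxFinset n, a l generalizing a with
  | zero => exact zero a (sum_eq_zero_iff.mp hw)
  | succ w ih =>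
    have hS : ((idxFinset n).filter (a · ≠ 0)).Nonempty := by
      by_contra hS
      simp only [not_nonempty_iff_eq_empty, filter_eq_empty_iff, not_not] at hS
      simp [sum_eq_zero hS] at hw
    obtain ⟨m, hmS, hle⟩ := exists_min_image _ id hS
    obtain ⟨hm, ham⟩ := mem_filter.mp hmS
    have hmin : VanishesBelow n a m := fun l hl hlm => by
      by_contra hal
      exact absurd (hle l (mem_filter.mpr ⟨hl, hal⟩)) (not_le.mpr hlm)
    have ha : a = Function.update a m (a m - 1) + Pi.single m 1 := by
      ext l
      rcases eq_or_ne l m with rfl | hlm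
      · simp; omega
      · simp [hlm]
    rw [ha]
    refine add_single _ m hm (fun l hl hlm => ?_) (ih _ ?_)
    · rw [Function.update_of_ne hlm.ne]
      exact hmin l hl hlm
    · rw [ha, sum_add_single, if_pos hm] at hw
      omega

section Monomials

variable {M : Type*} [Monoid M] (x : ℤ → M)

lemma mul_prod_map_pow_add_single {a : ℤ → ℕ} {m : ℤ} :
    ∀ L : List ℤ, L.Pairwise (· < ·) → m ∈ L → (∀ l ∈ L, l < m → a l = 0) →
      x m * (L.map fun l => x l ^ a l).prod
        = (L.map fun l => x l ^ (a + Pi.single m 1 : ℤ → ℕ) l).prod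
  | [], _, hm, _ => by simp at hm
  | r :: L, hL, hm, ha => by
    rw [List.pairwise_cons] at hL
    simp only [List.map_cons, List.prod_cons]
    rcases eq_or_ne r m with rfl | hrm
    · have hrest : ∀ l ∈ L, (a + Pi.single r 1 : ℤ → ℕ) l = a l := fun l hl => by
        simp [(hL.1 l hl).ne']
      rw [← mul_assoc, ← pow_succ']
      congr 1
      · simp
      · exact congrArg _ (List.map_congr_left fun l hl => by rw [hrest l hl])
    · have hmL : m ∈ L := (List.mem_cons.mp hm).resolve_left hrm.symm
      have hr : a r = 0 := ha r List.mem_cons_self (hL.1 m hmL)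
      have hr' : (a + Pi.single m 1 : ℤ → ℕ) r = 0 := by simp [hr, hrm]
      rw [hr, hr', pow_zero, one_mul, one_mul]
      exact mul_prod_map_pow_add_single L hL.2 hmL fun l hl => ha l (List.mem_cons_of_mem _ hl)

lemma mul_mono_of_vanishesBelow {n : ℕ} {a : ℤ → ℕ} {m : ℤ} (hm : m ∈ idxFinset n)
    (ha : VanishesBelow n a m) : x m * mono x n a = mono x n (a + Pi.single m 1) :=
  mul_prod_map_pow_add_single x _ (idxList_pairwise_lt n) (mem_idxList.mpr hm)
    fun l hl => ha l (mem_idxList.mp hl)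

end Monomials

lemma sum_Icc_zpow_smul_eq_sum_Ico_add {k X : Type*} [Field k] [AddCommGroup X] [Module k X]
    {q : k} (hq : q ≠ 0) {i p N : ℤ} (hip : i ≤ p) (hpN : p ≤ N + 1) (f : ℤ → X) :
    ∑ j ∈ Icc i N, q ^ (j - i) • f j
      = ∑ j ∈ Ico i p, q ^ (j - i) • f j + q ^ (p - i) • ∑ j ∈ Icc p N, q ^ (j - p) • f j := by
  have hsplit : Icc i N = Ico i p ∪ Icc p N := by
    ext j
    simp only [mem_union, mem_Icc, mem_Ico]
    omega
  have hdisj : Disjoint (Ico i p) (Icc p N) :=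
    disjoint_left.mpr fun j h1 h2 => by simp only [mem_Icc, mem_Ico] at h1 h2; omega
  rw [hsplit, sum_union hdisj, smul_sum]
  congr 1
  refine sum_congr rfl fun j _ => ?_
  rw [smul_smul, ← zpow_add₀ hq, sub_add_sub_cancel']

section Expansion

variable {k X : Type*} [Field k] [Ring X] [Algebra k X] {n : ℕ} {q : k} {x : ℤ → X}

lemma Om_eq_sum_Ico_add (hq : q ≠ 0) {i p : ℤ} (hip : i ≤ p) (hpn : p ≤ n + 1) :
    Om q x n i = ∑ j ∈ Ico i p, q ^ (j - i) • (x (-j) * x j) + q ^ (p - i) • Om q x n p :=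
  sum_Icc_zpow_smul_eq_sum_Ico_add hq hip hpn _

lemma Om_eq_mul_add (hq : q ≠ 0) {i : ℤ} (hin : i ≤ n) :
    Om q x n i = x (-i) * x i + q • Om q x n (i + 1) := by
  rw [Om_eq_sum_Ico_add hq (Int.le_add_one le_rfl) (by omega), Ico_add_one_right_eq_Icc, Icc_self,
    sum_singleton, sub_self, add_sub_cancel_left, zpow_zero, zpow_one, one_smul]

lemma Om_eq_zero {i : ℤ} (hi : (n : ℤ) < i) : Om q x n i = 0 := by
  rw [Om, Icc_eq_empty (by omega), sum_empty]

def omExpansion (q : k) (x : ℤ → X) (n : ℕ) (i : ℤ) (a : ℤ → ℕ) : X :=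
  ∑ j ∈ Icc i (n : ℤ),
    q ^ (j - i + (sE j a : ℤ)) • mono x n (a + Pi.single (-j) 1 + Pi.single j 1)

lemma omExpansion_eq_zero {a : ℤ → ℕ} {i : ℤ} (hi : (n : ℤ) < i) :
    omExpansion q x n i a = 0 := by
  rw [omExpansion, Icc_eq_empty (by omega), sum_empty]

lemma omExpansion_eq_sum_Icc_add (hq : q ≠ 0) {a : ℤ → ℕ} {i m : ℤ} (ha : VanishesBelow n a m)
    (him : i ≤ m) (hmn : m ≤ n) :
    omExpansion q x n i a
      = ∑ j ∈ Icc i m, q ^ (j - i) • mono x n (a + Pi.single (-j) 1 + Pi.single j 1)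
        + q ^ (m + 1 - i) • omExpansion q x n (m + 1) a := by
  have hterm : ∀ p j : ℤ,
      q ^ (j - p + (sE j a : ℤ)) • mono x n (a + Pi.single (-j) 1 + Pi.single j 1)
        = q ^ (j - p) • q ^ (sE j a : ℤ) • mono x n (a + Pi.single (-j) 1 + Pi.single j 1) :=
    fun p j => by rw [smul_smul, zpow_add₀ hq]
  simp only [omExpansion, hterm]
  rw [sum_Icc_zpow_smul_eq_sum_Ico_add hq (by omega : i ≤ m + 1) (by omega),
    Ico_add_one_right_eq_Icc]
  congr 1
  refine sum_congr rfl fun j hj => ?_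
  rw [mem_Icc] at hj
  rw [sE_eq_zero ha hj.2 (by omega), Nat.cast_zero, zpow_zero, one_smul]

lemma pair_mul_mono_of_vanishesBelow {a : ℤ → ℕ} {j : ℤ} (ha : VanishesBelow n a j)
    (hj : 1 ≤ j) (hjn : j ≤ n) :
    x (-j) * x j * mono x n a = mono x n (a + Pi.single (-j) 1 + Pi.single j 1) := by
  rw [mul_assoc, mul_mono_of_vanishesBelow x (mem_idxFinset.mpr ⟨by omega, by omega, hjn⟩) ha,
    mul_mono_of_vanishesBelow x (mem_idxFinset.mpr ⟨by omega, by omega, by omega⟩)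
      ((ha.anti (by omega)).add_single (by omega)), add_right_comm]

lemma Om_mul_mono_of_vanishesBelow (hq : q ≠ 0) {a : ℤ → ℕ} {i m : ℤ}
    (ha : VanishesBelow n a m) (hi : 1 ≤ i) (him : i ≤ m) (hmn : m ≤ n)
    (hrec : Om q x n (m + 1) * mono x n a
      = (∏ l ∈ Icc (-(n : ℤ)) (-(m + 1)), q ^ (2 * a l)) • omExpansion q x n (m + 1) a) :
    Om q x n i * mono x n a
      = (∏ l ∈ Icc (-(n : ℤ)) (-i), q ^ (2 * a l)) • omExpansion q x n i a := by
  rw [prod_pow_two_mul_eq_one q ha (by omega) (by omega), one_smul] at hrec ⊢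
  rw [Om_eq_sum_Ico_add hq (by omega : i ≤ m + 1) (by omega), Ico_add_one_right_eq_Icc, add_mul,
    sum_mul, smul_mul_assoc, hrec, omExpansion_eq_sum_Icc_add hq ha him hmn]
  congr 1
  refine sum_congr rfl fun j hj => ?_
  rw [mem_Icc] at hj
  rw [smul_mul_assoc, pair_mul_mono_of_vanishesBelow (ha.anti hj.2) (by omega) (by omega)]

end Expansion

section Relations

variable {k X : Type*} [Field k] [Ring X] [Algebra k X] {n : ℕ} {q : k} {x : ℤ → X}
  (hrel1 : ∀ i j : ℤ, -(n : ℤ) ≤ i → j ≤ n → i ≠ 0 → j ≠ 0 → i < j → j ≠ -i →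
    x j * x i = q • (x i * x j))
include hrel1

-- The hypothesis keeps `x_m` from passing `x_{-m}`, which obeys a different relation.
lemma mul_mono_eq_smul_mono {m : ℤ} (hm : m ∈ idxFinset n) (b : ℤ → ℕ)
    (hb : m < 0 ∨ b (-m) = 0) :
    x m * mono x n b
      = q ^ (∑ l ∈ (idxFinset n).filter (· < m), b l) • mono x n (b + Pi.single m 1) := by
  induction b using induction_add_single_left with
  | zero b hb0 =>
    rw [sum_eq_zero fun l hl => hb0 l (mem_filter.mp hl).1, pow_zero, one_smul]
    exact mul_mono_of_vanishesBelow x hm fun l hl _ => hb0 l hl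
  | add_single c r hr hc ih =>
    rcases le_or_gt m r with hmr | hrm
    · have hvan : VanishesBelow n (c + Pi.single r 1) m := (hc.anti hmr).add_single hmr
      rw [sum_eq_zero fun l hl => hvan l (mem_filter.mp hl).1 (mem_filter.mp hl).2, pow_zero,
        one_smul]
      exact mul_mono_of_vanishesBelow x hm hvan
    · have hmr : m ≠ -r := by
        rintro rfl
        rcases hb with h | h
        · omega
        · simp at h
      have hcm : m < 0 ∨ c (-m) = 0 := hb.imp_right fun h => (Nat.add_eq_zero_iff.mp h).1
      obtain ⟨hr0, hr1, -⟩ := mem_idxFinset.mp hr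
      obtain ⟨hm0, -, hm2⟩ := mem_idxFinset.mp hm
      have hswap : x m * x r = q • (x r * x m) := hrel1 r m hr1 hm2 hr0 hm0 hrm hmr
      rw [← mul_mono_of_vanishesBelow x hr hc, ← mul_assoc, hswap, smul_mul_assoc, mul_assoc,
        ih hcm, mul_smul_comm, smul_smul,
        mul_mono_of_vanishesBelow x hr (hc.add_single hrm.le), add_right_comm,
        sum_add_single, if_pos (mem_filter.mpr ⟨hr, hrm⟩), pow_succ']

lemma smul_mul_mono_add_pair (hq : q ≠ 0) {a : ℤ → ℕ} {i j m : ℤ} (hm : m ∈ idxFinset n)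
    (ha : VanishesBelow n a m) (hj : 1 ≤ j) (hmj : m < j) (hjn : j ≤ n) :
    q ^ (j - i + (sE j a : ℤ)) • (x m * mono x n (a + Pi.single (-j) 1 + Pi.single j 1))
      = q ^ (j - i + (sE j (a + Pi.single m 1) : ℤ))
          • mono x n (a + Pi.single m 1 + Pi.single (-j) 1 + Pi.single j 1) := by
  obtain ⟨hm0, hm1, hm2⟩ := mem_idxFinset.mp hm
  have hjI : j ∈ idxFinset n := mem_idxFinset.mpr ⟨by omega, by omega, hjn⟩
  have hnegjI : -j ∈ idxFinset n := mem_idxFinset.mpr ⟨by omega, by omega, by omega⟩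
  have hb : m < 0 ∨ (a + Pi.single (-j) 1 + Pi.single j 1 : ℤ → ℕ) (-m) = 0 := by
    refine (lt_or_gt_of_ne hm0).imp id fun hm0 => ?_
    simp [ha (-m) (mem_idxFinset.mpr ⟨by omega, by omega, by omega⟩) (by omega),
      show -m ≠ -j by omega, show -m ≠ j by omega]
  have hweight : ∑ l ∈ (idxFinset n).filter (· < m),
      (a + Pi.single (-j) 1 + Pi.single j 1 : ℤ → ℕ) l = if -j < m then 1 else 0 := by
    rw [sum_add_single, sum_add_single, sum_eq_zero fun l hl => ha l (mem_filter.mp hl).1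
      (mem_filter.mp hl).2]
    simp only [mem_filter, hjI, hnegjI, true_and, if_neg (not_lt.mpr hmj.le)]
    omega
  have hsE : sE j (a + Pi.single m 1) = sE j a + if -j < m then 1 else 0 := by
    rw [sE_add_single]
    congr 1
    exact if_congr ⟨fun h => h.2.1, fun h => ⟨hm0, h, hmj⟩⟩ rfl rfl
  rw [mul_mono_eq_smul_mono hrel1 hm _ hb, hweight, hsE, smul_smul, add_right_comm,
    add_right_comm a, Nat.cast_add, ← add_assoc, zpow_add₀ hq (j - i + _), zpow_natCast]

lemma pair_mul_comm_of_abs_lt {j l : ℤ} (hl : l ∈ idxFinset n) (h1 : -j < l) (h2 : l < j)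
    (hjn : j ≤ n) : x (-j) * x j * x l = x l * (x (-j) * x j) := by
  obtain ⟨hl0, hl1, hl2⟩ := mem_idxFinset.mp hl
  have e1 : x j * x l = q • (x l * x j) := hrel1 l j hl1 hjn hl0 (by omega) h2 (by omega)
  have e2 : x l * x (-j) = q • (x (-j) * x l) := hrel1 (-j) l (by omega) hl2 (by omega) hl0 h1
    (by omega)
  rw [mul_assoc, e1, ← mul_assoc, e2, mul_smul_comm, smul_mul_assoc, mul_assoc]

lemma pair_mul_neg_of_lt {j p : ℤ} (hj : 1 ≤ j) (hjp : j < p) (hpn : p ≤ n) :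
    x (-j) * x j * x (-p) = q ^ 2 • (x (-p) * (x (-j) * x j)) := by
  have e1 : x j * x (-p) = q • (x (-p) * x j) :=
    hrel1 (-p) j (by omega) (by omega) (by omega) (by omega) (by omega) (by omega)
  have e2 : x (-j) * x (-p) = q • (x (-p) * x (-j)) :=
    hrel1 (-p) (-j) (by omega) (by omega) (by omega) (by omega) (by omega) (by omega)
  rw [mul_assoc, e1, mul_smul_comm, ← mul_assoc, e2, smul_mul_assoc, smul_smul, mul_assoc, sq]

lemma Om_mul_comm_of_abs_lt {i l : ℤ} (hl : l ∈ idxFinset n) (h1 : -i < l) (h2 : l < i) :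
    Om q x n i * x l = x l * Om q x n i := by
  simp only [Om, sum_mul, mul_sum, smul_mul_assoc, mul_smul_comm]
  refine sum_congr rfl fun j hj => ?_
  rw [mem_Icc] at hj
  rw [pair_mul_comm_of_abs_lt hrel1 hl (by omega) (by omega) hj.2]

variable (hrel2 : ∀ i : ℤ, 1 ≤ i → i ≤ n →
    x i * x (-i) = (q ^ 2) • (x (-i) * x i) + (q ^ 2 * (q - q⁻¹)) • Om q x n (i + 1))
include hrel2

lemma Om_mul_neg_self (hq : q ≠ 0) {p : ℤ} (hp : 1 ≤ p) (hpn : p ≤ n) :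
    Om q x n p * x (-p) = q ^ 2 • (x (-p) * Om q x n p) := by
  have hcomm : Om q x n (p + 1) * x (-p) = x (-p) * Om q x n (p + 1) :=
    Om_mul_comm_of_abs_lt hrel1 (mem_idxFinset.mpr ⟨by omega, by omega, by omega⟩) (by omega)
      (by omega)
  rw [Om_eq_mul_add hq hpn, add_mul, smul_mul_assoc, hcomm, mul_assoc, hrel2 p hp hpn]
  simp only [mul_add, smul_add, mul_smul_comm, smul_smul, ← mul_assoc]
  rw [add_assoc, ← add_smul]
  congr 2
  field_simp
  ring

lemma Om_mul_neg (hq : q ≠ 0) {i p : ℤ} (hi : 1 ≤ i) (hip : i ≤ p) (hpn : p ≤ n) :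
    Om q x n i * x (-p) = q ^ 2 • (x (-p) * Om q x n i) := by
  rw [Om_eq_sum_Ico_add hq hip (by omega), add_mul, mul_add, smul_add, sum_mul, mul_sum, smul_sum,
    smul_mul_assoc, Om_mul_neg_self hrel1 hrel2 hq (by omega) hpn, mul_smul_comm,
    smul_comm (q ^ (p - i))]
  congr 1
  refine sum_congr rfl fun j hj => ?_
  rw [mem_Ico] at hj
  rw [smul_mul_assoc, pair_mul_neg_of_lt hrel1 (by omega) hj.2 hpn, mul_smul_comm, smul_comm]

lemma Om_mul_mono_add_single_of_lt (hq : q ≠ 0) {a : ℤ → ℕ} {i m : ℤ} (hi : 1 ≤ i)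
    (hm : m ∈ idxFinset n) (hmi : m < i) (ha : VanishesBelow n a m)
    (hIH : Om q x n i * mono x n a
      = (∏ l ∈ Icc (-(n : ℤ)) (-i), q ^ (2 * a l)) • omExpansion q x n i a) :
    Om q x n i * mono x n (a + Pi.single m 1)
      = (∏ l ∈ Icc (-(n : ℤ)) (-i), q ^ (2 * (a + Pi.single m 1 : ℤ → ℕ) l))
          • omExpansion q x n i (a + Pi.single m 1) := by
  obtain ⟨hm0, hm1, hm2⟩ := mem_idxFinset.mp hm
  obtain ⟨c, hcomm, hprod⟩ : ∃ c : k, Om q x n i * x m = c • (x m * Om q x n i) ∧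
      ∏ l ∈ Icc (-(n : ℤ)) (-i), q ^ (2 * (a + Pi.single m 1 : ℤ → ℕ) l)
        = c * ∏ l ∈ Icc (-(n : ℤ)) (-i), q ^ (2 * a l) := by
    rw [prod_pow_two_mul_add_single]
    by_cases hmi' : m ≤ -i
    · refine ⟨q ^ 2, ?_, by rw [if_pos (mem_Icc.mpr ⟨hm1, hmi'⟩)]⟩
      simpa using Om_mul_neg hrel1 hrel2 hq (p := -m) hi (by omega) (by omega)
    · refine ⟨1, ?_, by rw [if_neg fun h => hmi' (mem_Icc.mp h).2]⟩
      rw [one_smul]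
      exact Om_mul_comm_of_abs_lt hrel1 hm (by omega) hmi
  calc Om q x n i * mono x n (a + Pi.single m 1)
      = c • (x m * (Om q x n i * mono x n a)) := by
        rw [← mul_mono_of_vanishesBelow x hm ha, ← mul_assoc, hcomm, smul_mul_assoc, mul_assoc]
    _ = _ := by
        rw [hIH, mul_smul_comm, smul_smul, ← hprod, omExpansion, omExpansion, mul_sum]
        congr 1
        refine sum_congr rfl fun j hj => ?_
        rw [mem_Icc] at hj
        rw [mul_smul_comm, smul_mul_mono_add_pair hrel1 hq hm ha (by omega) (by omega) hj.2]

theorem Om_mul_mono (hq : q ≠ 0) {i : ℤ} (hi : 1 ≤ i) (a : ℤ → ℕ) :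
    Om q x n i * mono x n a
      = (∏ l ∈ Icc (-(n : ℤ)) (-i), q ^ (2 * a l)) • omExpansion q x n i a := by
  induction a using induction_add_single_left generalizing i with
  | zero a ha =>
    rcases le_or_gt i n with hin | hin
    · refine Om_mul_mono_of_vanishesBelow hq (fun l hl _ => ha l hl) hi hin le_rfl ?_
      rw [Om_eq_zero (by omega), omExpansion_eq_zero (by omega), zero_mul, smul_zero]
    · rw [Om_eq_zero hin, omExpansion_eq_zero hin, zero_mul, smul_zero]
  | add_single a m hm ha ih =>
    rcases lt_or_ge m i with hmi | hmi
    · exact Om_mul_mono_add_single_of_lt hrel1 hrel2 hq hi hm hmi ha (ih hi)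
    · exact Om_mul_mono_of_vanishesBelow hq (ha.add_single le_rfl) hi hmi
        (mem_idxFinset.mp hm).2.2
        (Om_mul_mono_add_single_of_lt hrel1 hrel2 hq (by omega) hm (by omega) ha (ih (by omega)))

end Relations

theorem stmt7_general {k X : Type*} [Field k] [Ring X] [Algebra k X]
    (n : ℕ) (q : k) (hq : q ≠ 0)
    (x : ℤ → X)
    (hrel1 : ∀ i j : ℤ, -(n : ℤ) ≤ i → j ≤ n → i ≠ 0 → j ≠ 0 → i < j → j ≠ -i →
      x j * x i = q • (x i * x j))
    (hrel2 : ∀ i : ℤ, 1 ≤ i → i ≤ n →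
      x i * x (-i) = (q ^ 2) • (x (-i) * x i) + (q ^ 2 * (q - q⁻¹)) • Om q x n (i + 1)) :
    ∀ i : ℤ, 1 ≤ i → i ≤ n → ∀ a : ℤ → ℕ, a 0 = 0 →
      Om q x n i * mono x n a
        = (∏ l ∈ Finset.Icc (-(n : ℤ)) (-i), q ^ (2 * a l)) •
            ∑ j ∈ Finset.Icc i (n : ℤ),
              q ^ (j - i + (sE j a : ℤ)) •
                mono x n (a + Pi.single (-j) 1 + Pi.single j 1) :=
  fun _ hi _ a _ => Om_mul_mono hrel1 hrel2 hq hi a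

/-- `Ω_i x^a = (∏_{l=-n}^{-i} q^{2a_l}) Σ_{j=i}^{n} q^{j-i+s_j(a)} x^{a+ε_{-j}+ε_j}`. -/
theorem stmt7 {k X : Type*} [Field k] [CharZero k] [Ring X] [Algebra k X]
    (n : ℕ) (hn : 2 ≤ n) (q : k) (hq : q ≠ 0) (hroot : ∀ r : ℕ, r ≠ 0 → q ^ r ≠ 1)
    (x : ℤ → X)
    (hrel1 : ∀ i j : ℤ, -(n : ℤ) ≤ i → j ≤ n → i ≠ 0 → j ≠ 0 → i < j → j ≠ -i →
      x j * x i = q • (x i * x j))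
    (hrel2 : ∀ i : ℤ, 1 ≤ i → i ≤ n →
      x i * x (-i) = (q ^ 2) • (x (-i) * x i) + (q ^ 2 * (q - q⁻¹)) • Om q x n (i + 1)) :
    ∀ i : ℤ, 1 ≤ i → i ≤ n → ∀ a : ℤ → ℕ, a 0 = 0 →
      Om q x n i * mono x n a
        = (∏ l ∈ Finset.Icc (-(n : ℤ)) (-i), q ^ (2 * a l)) •
            ∑ j ∈ Finset.Icc i (n : ℤ),
              q ^ (j - i + (sE j a : ℤ)) •
                mono x n (a + Pi.single (-j) 1 + Pi.single j 1) :=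
  stmt7_general n q hq x hrel1 hrel2
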